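/- If (C, D) is an n×n matrix factorization of a polynomial f and g, h are two polynomials, then the 2n×2n block matrices [[C, -g·I_n],[h·I_n, D]] and [[D, g·I_n],[-h·I_n, C]] form a matrix factorization of f + gh. -/

import Mathlib

open Matrix

section

variable {S : Type*} [CommRing S] {ι : Type*} [Fintype ι] [DecidableEq ι]

def IsMatrixFactorization (f : S) (C D : Matrix ι ι S) : Prop :=
  C * D = f • 1 ∧ D * C = f • 1

theorem fromBlocks_mul_fromBlocks_eq_smul_one {f : S} {C D : Matrix ι ι S}
    (hCD : C * D = f • 1) (hDC : D * C = f • 1) (g h : S) :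
    fromBlocks C (-(g • 1)) (h • 1) D * fromBlocks D (g • 1) (-(h • 1)) C =
      (f + g * h) • 1 := by
  rw [fromBlocks_multiply, ← fromBlocks_one, fromBlocks_smul]
  congr 1
  · rw [hCD, neg_mul_neg, smul_one_mul, smul_smul, add_smul]
  · rw [mul_smul_one, neg_mul, smul_one_mul, add_neg_cancel, smul_zero]
  · rw [smul_one_mul, mul_neg, mul_smul_one, add_neg_cancel, smul_zero]
  · rw [hDC, smul_one_mul, smul_smul, add_smul, mul_comm h g, add_comm]

/-- The second product is the first one for the factorization `(D, C)`, with `g, h` replaced by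
`-g, -h`; this leaves `f + g * h` unchanged. -/
theorem IsMatrixFactorization.fromBlocks {f : S} {C D : Matrix ι ι S}
    (hf : IsMatrixFactorization f C D) (g h : S) :
    IsMatrixFactorization (f + g * h)
      (fromBlocks C (-(g • 1)) (h • 1) D) (fromBlocks D (g • 1) (-(h • 1)) C) := by
  refine ⟨fromBlocks_mul_fromBlocks_eq_smul_one hf.1 hf.2 g h, ?_⟩
  simpa only [neg_smul, neg_neg, neg_mul_neg] using
    fromBlocks_mul_fromBlocks_eq_smul_one hf.2 hf.1 (-g) (-h)

end

/-- If `(C, D)` is an `n×n` matrix factorization of `f` and `g, h` are polynomials,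
then the displayed `2n×2n` block matrices form a matrix factorization of `f + gh`. -/
theorem standard_method_step
    {K : Type*} [Field K] {σ : Type*} {n : ℕ}
    (f g h : MvPolynomial σ K)
    (C D : Matrix (Fin n) (Fin n) (MvPolynomial σ K))
    (h1 : C * D = f • 1) (h2 : D * C = f • 1) :
    fromBlocks C (-(g • 1)) (h • 1) D * fromBlocks D (g • 1) (-(h • 1)) C =
      (f + g * h) • 1 ∧
    fromBlocks D (g • 1) (-(h • 1)) C * fromBlocks C (-(g • 1)) (h • 1) D =
      (f + g * h) • 1 :=
  IsMatrixFactorization.fromBlocks ⟨h1, h2⟩ g h
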